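/- Mass preservation and L¹-contraction of Ehrhard symmetrization: for sets E, E₁, E₂ of finite anisotropic Gaussian perimeter, one has γ_A(E) = γ_A(E^s) and γ_A(E₁ Δ E₂) ≥ γ_A(E₁^s Δ E₂^s), where E^s is the Ehrhard symmetrization of E with respect to the direction −e_n. -/

import Mathlib

open MeasureTheory Metric Filter Set
open scoped ENNReal Topology symmDiff

noncomputable section

/-- The quadratic form `⟨Ax, x⟩`. -/
def qf {m : ℕ} (A : Matrix (Fin m) (Fin m) ℝ) (x : Fin m → ℝ) : ℝ :=
  ∑ i, (∑ j, A i j * x j) * x i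

/-- The (unnormalized) Gaussian density `e^{−⟨Ax,x⟩/2}` at the point `x = (z,y)`. -/
def dens {n : ℕ} (A : Matrix (Fin (n + 1)) (Fin (n + 1)) ℝ) (z : Fin n → ℝ) (y : ℝ) : ℝ :=
  Real.exp (- qf A (Fin.snoc z y) / 2)

/-- The one-dimensional section `E_z` of `E ⊆ ℝⁿ × ℝ`. -/
def sect {n : ℕ} (E : Set ((Fin n → ℝ) × ℝ)) (z : Fin n → ℝ) : Set ℝ :=
  {y | (z, y) ∈ E}

/-- The Ehrhard symmetrization `E^s` of `E` with respect to the direction `−e_n`: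
`E^s = {(z,y) : y < φ_z⁻¹(v_E(z))}`, expressed equivalently as
`φ_z(y) < v_E(z)` since `φ_z` is a strictly increasing positive bijection onto
`(0, μ_z(ℝ))`. -/
def ehrhardSymm {n : ℕ} (A : Matrix (Fin (n + 1)) (Fin (n + 1)) ℝ)
    (E : Set ((Fin n → ℝ) × ℝ)) : Set ((Fin n → ℝ) × ℝ) :=
  {p | (∫ y in Set.Iio p.2, dens A p.1 y) < ∫ y in sect E p.1, dens A p.1 y}

/-- The anisotropic Gaussian measure `γ_A(E)` on `ℝⁿ × ℝ ≅ ℝ^{n+1}`. -/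
def gMass {n : ℕ} (A : Matrix (Fin (n + 1)) (Fin (n + 1)) ℝ)
    (E : Set ((Fin n → ℝ) × ℝ)) : ℝ :=
  (Real.sqrt A.det / (2 * Real.pi) ^ (((n : ℝ) + 1) / 2)) * ∫ p in E, dens A p.1 p.2

/-- The essential boundary `∂^M E` (points of density neither `0` nor `1`). -/
def essBoundaryP {n : ℕ} (E : Set ((Fin n → ℝ) × ℝ)) : Set ((Fin n → ℝ) × ℝ) :=
  {x | ¬ Tendsto (fun r : ℝ => volume (E ∩ ball x r) / volume (ball x r)) (𝓝[>] 0) (𝓝 0) ∧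
       ¬ Tendsto (fun r : ℝ => volume (E ∩ ball x r) / volume (ball x r)) (𝓝[>] 0) (𝓝 1)}

/-- `E` has finite anisotropic Gaussian perimeter:
`∫_{∂^M E} e^{−⟨Ax,x⟩/2} dH^{n} < ∞`. -/
def finGaussPerim {n : ℕ} (A : Matrix (Fin (n + 1)) (Fin (n + 1)) ℝ)
    (E : Set ((Fin n → ℝ) × ℝ)) : Prop :=
  (∫⁻ p in essBoundaryP E, ENNReal.ofReal (dens A p.1 p.2) ∂(μH[(n : ℝ)])) < ⊤

/-!
By Fubini both claims reduce to the one-dimensional sections `E_z`. On a line with a positive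
integrable density `f`, the function `φ(t) = ∫_{-∞}^t f` is a continuous strictly increasing
bijection onto `(0, ∫ f)`, so the half-line `{φ < v}` has `f`-mass exactly `v` for every
`v ∈ [0, ∫ f]`. The section of `E^s` at `z` is the half-line of mass `μ_z(E_z)`, which gives mass
preservation; two half-lines of masses `v₁, v₂` differ by a set of mass `|v₁ - v₂|`, and
`|μ_z(F₁) - μ_z(F₂)| ≤ μ_z(F₁ ∆ F₂)`, which gives the contraction.
-/

open scoped Matrix

theorem exists_pos_mul_norm_sq_le {E : Type*} [NormedAddCommGroup E] [NormedSpace ℝ E]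
    [ProperSpace E] {q : E → ℝ} (hq : Continuous q) (hpos : ∀ x ≠ 0, 0 < q x)
    (hsmul : ∀ (t : ℝ) x, q (t • x) = t ^ 2 * q x) :
    ∃ c > 0, ∀ x, c * ‖x‖ ^ 2 ≤ q x := by
  obtain ⟨c, hc, hcq⟩ := (isCompact_sphere (0 : E) 1).exists_forall_le' hq.continuousOn
    fun x hx => hpos x (ne_zero_of_mem_sphere one_ne_zero ⟨x, hx⟩)
  refine ⟨c, hc, fun x => ?_⟩
  rcases eq_or_ne x 0 with rfl | hx
  · simpa using (hsmul 0 0).ge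
  have hx' : 0 < ‖x‖ := norm_pos_iff.2 hx
  calc c * ‖x‖ ^ 2 ≤ q (‖x‖⁻¹ • x) * ‖x‖ ^ 2 := by
        gcongr
        exact hcq _ (by simp [norm_smul, hx'.ne'])
    _ = q x := by rw [hsmul]; field_simp

theorem qf_eq_dotProduct {m : ℕ} (A : Matrix (Fin m) (Fin m) ℝ) (x : Fin m → ℝ) :
    qf A x = x ⬝ᵥ A *ᵥ x := by
  simp only [qf, dotProduct, Matrix.mulVec, mul_comm]

theorem Matrix.PosDef.exists_pos_mul_sum_sq_le_qf {m : ℕ} {A : Matrix (Fin m) (Fin m) ℝ}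
    (hA : A.PosDef) : ∃ c > 0, ∀ x, c * ∑ i, x i ^ 2 ≤ qf A x := by
  obtain ⟨c, hc, hcq⟩ := exists_pos_mul_norm_sq_le (E := EuclideanSpace ℝ (Fin m))
    (q := fun x => qf A x.ofLp) (by unfold qf; fun_prop)
    (fun x hx => by simpa [qf_eq_dotProduct] using hA.re_dotProduct_pos (x := x.ofLp) (by simpa))
    (fun t x => by simp only [qf_eq_dotProduct, WithLp.ofLp_smul, Matrix.mulVec_smul,
      dotProduct_smul, smul_dotProduct, smul_eq_mul]; ring)
  exact ⟨c, hc, fun x => by simpa [EuclideanSpace.real_norm_sq_eq] using hcq (WithLp.toLp 2 x)⟩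

section Fubini

variable {α β : Type*} [MeasurableSpace α] [MeasurableSpace β] {μ : Measure α} {ν : Measure β}
  {g : α × β → ℝ} {F : Set (α × β)}

theorem integral_indicator_prodMk (hF : MeasurableSet F) (x : α) :
    ∫ y, F.indicator g (x, y) ∂ν = ∫ y in Prod.mk x ⁻¹' F, g (x, y) ∂ν := by
  rw [← integral_indicator (measurable_prodMk_left hF)]
  rfl

theorem setIntegral_prod_eq_integral_setIntegral_preimage [SFinite μ] [SFinite ν]
    (hg : Integrable g (μ.prod ν)) (hF : MeasurableSet F) :
    ∫ p in F, g p ∂(μ.prod ν) = ∫ x, ∫ y in Prod.mk x ⁻¹' F, g (x, y) ∂ν ∂μ := by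
  simp only [← integral_indicator hF, integral_prod _ (hg.indicator hF),
    integral_indicator_prodMk hF]

theorem MeasureTheory.Integrable.setIntegral_preimage_prodMk [SFinite μ] [SFinite ν]
    (hg : Integrable g (μ.prod ν)) (hF : MeasurableSet F) :
    Integrable (fun x => ∫ y in Prod.mk x ⁻¹' F, g (x, y) ∂ν) μ := by
  simpa only [integral_indicator_prodMk hF] using (hg.indicator hF).integral_prod_left

theorem MeasureTheory.StronglyMeasurable.setIntegral_preimage_prodMk [SFinite ν]
    (hg : StronglyMeasurable g) (hF : MeasurableSet F) :
    StronglyMeasurable (fun x => ∫ y in Prod.mk x ⁻¹' F, g (x, y) ∂ν) := by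
  simpa only [integral_indicator_prodMk hF] using (hg.indicator hF).integral_prod_right'

end Fubini

section GaussianDensity

variable {n : ℕ} {A : Matrix (Fin (n + 1)) (Fin (n + 1)) ℝ}

theorem continuous_dens (A : Matrix (Fin (n + 1)) (Fin (n + 1)) ℝ) :
    Continuous fun p : (Fin n → ℝ) × ℝ => dens A p.1 p.2 := by
  unfold dens qf
  fun_prop

theorem dens_pos (A : Matrix (Fin (n + 1)) (Fin (n + 1)) ℝ) (z : Fin n → ℝ) (y : ℝ) :
    0 < dens A z y :=
  Real.exp_pos _

theorem Matrix.PosDef.exists_dens_le (hA : A.PosDef) : ∃ c > 0, ∀ z y,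
    dens A z y ≤ (∏ i, Real.exp (-c * z i ^ 2)) * Real.exp (-c * y ^ 2) := by
  obtain ⟨c, hc, hcq⟩ := hA.exists_pos_mul_sum_sq_le_qf
  refine ⟨c / 2, half_pos hc, fun z y => ?_⟩
  have := hcq (Fin.snoc z y)
  simp only [Fin.sum_univ_castSucc, Fin.snoc_castSucc, Fin.snoc_last] at this
  rw [dens, ← Real.exp_sum, ← Real.exp_add, Real.exp_le_exp, ← Finset.mul_sum]
  linarith

theorem integrable_dens (hA : A.PosDef) :
    Integrable fun p : (Fin n → ℝ) × ℝ => dens A p.1 p.2 := by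
  obtain ⟨c, hc, hdens⟩ := hA.exists_dens_le
  have hg := integrable_exp_neg_mul_sq hc
  refine ((Integrable.fintype_prod fun _ => hg).mul_prod hg).mono'
    (continuous_dens A).aestronglyMeasurable (.of_forall fun p => ?_)
  rw [Real.norm_of_nonneg (dens_pos A _ _).le]
  exact hdens p.1 p.2

theorem integrable_dens_sect (hA : A.PosDef) (z : Fin n → ℝ) : Integrable (dens A z) := by
  obtain ⟨c, hc, hdens⟩ := hA.exists_dens_le
  refine ((integrable_exp_neg_mul_sq hc).const_mul (∏ i, Real.exp (-c * z i ^ 2))).mono'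
    ((continuous_dens A).comp (.prodMk_right z)).aestronglyMeasurable (.of_forall fun y => ?_)
  rw [Real.norm_of_nonneg (dens_pos A z y).le]
  exact hdens z y

end GaussianDensity

section SetIntegral

variable {α : Type*} [MeasurableSpace α] {μ : Measure α} {g : α → ℝ} {s t : Set α}

theorem setIntegral_sub_setIntegral_le_setIntegral_diff (hg : Integrable g μ) (hg₀ : 0 ≤ g)
    (ht : MeasurableSet t) : ∫ x in s, g x ∂μ - ∫ x in t, g x ∂μ ≤ ∫ x in s \ t, g x ∂μ := by
  have hinter : ∫ x in s ∩ t, g x ∂μ ≤ ∫ x in t, g x ∂μ :=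
    setIntegral_mono_set hg.integrableOn (.of_forall hg₀) inter_subset_right.eventuallyLE
  linarith [integral_inter_add_sdiff ht hg.integrableOn (μ := μ) (s := s)]

theorem abs_setIntegral_sub_setIntegral_le (hg : Integrable g μ) (hg₀ : 0 ≤ g)
    (hs : MeasurableSet s) (ht : MeasurableSet t) :
    |∫ x in s, g x ∂μ - ∫ x in t, g x ∂μ| ≤ ∫ x in s ∆ t, g x ∂μ := by
  have hmono {u : Set α} (hu : u ⊆ s ∆ t) : ∫ x in u, g x ∂μ ≤ ∫ x in s ∆ t, g x ∂μ :=
    setIntegral_mono_set hg.integrableOn (.of_forall hg₀) hu.eventuallyLE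
  rw [abs_sub_le_iff]
  exact ⟨(setIntegral_sub_setIntegral_le_setIntegral_diff hg hg₀ ht).trans
      (hmono subset_union_left),
    (setIntegral_sub_setIntegral_le_setIntegral_diff hg hg₀ hs).trans (hmono subset_union_right)⟩

end SetIntegral

section HalfLine

variable {f : ℝ → ℝ}

theorem continuous_setIntegral_Iio (hf : Integrable f) :
    Continuous fun t => ∫ y in Iio t, f y :=
  continuous_iff_continuousAt.2 fun t =>
    (hf.integrableOn.continuousOn_Iic_primitive_Iio (a₀ := t + 1)).continuousAt
      (Iic_mem_nhds (lt_add_one t))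

theorem strictMono_setIntegral_Iio (hf : Integrable f) (hpos : ∀ x, 0 < f x) :
    StrictMono fun t => ∫ y in Iio t, f y := by
  intro a b hab
  rw [← sub_pos, intervalIntegral.integral_Iio_sub_Iio hf.integrableOn hab.le,
    setIntegral_pos_iff_support_of_nonneg_ae (.of_forall fun x => (hpos x).le) hf.integrableOn,
    Function.support_eq_univ fun x => (hpos x).ne', univ_inter]
  simp [hab]

theorem tendsto_setIntegral_Iio_atTop (hf : Integrable f) :
    Tendsto (fun t => ∫ y in Iio t, f y) atTop (𝓝 (∫ y, f y)) :=
  (aecover_Iio tendsto_id).integral_tendsto_of_countably_generated hf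

/-- For `φ(t) = ∫_{-∞}^t f` with `f > 0` this is the half-line `(-∞, φ⁻¹(v))` when
`0 < v < ∫ f`; it is empty for `v ≤ 0` and all of `ℝ` for `v ≥ ∫ f`. -/
def halfLineOfMass (f : ℝ → ℝ) (v : ℝ) : Set ℝ :=
  {t | ∫ y in Iio t, f y < v}

theorem measurableSet_halfLineOfMass (hf : Integrable f) (v : ℝ) :
    MeasurableSet (halfLineOfMass f v) :=
  measurableSet_lt (continuous_setIntegral_Iio hf).measurable measurable_const

theorem setIntegral_halfLineOfMass (hf : Integrable f) (hpos : ∀ x, 0 < f x)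
    {v : ℝ} (hv₀ : 0 ≤ v) (hv : v ≤ ∫ y, f y) :
    ∫ x in halfLineOfMass f v, f x = v := by
  have hmono := strictMono_setIntegral_Iio hf hpos
  rcases hv₀.eq_or_lt with rfl | hv₀
  · have : halfLineOfMass f 0 = ∅ := eq_empty_of_forall_notMem fun t ht =>
      ht.not_ge (setIntegral_nonneg measurableSet_Iio fun x _ => (hpos x).le)
    rw [this, Measure.restrict_empty, integral_zero_measure]
  rcases hv.lt_or_eq with hv | rfl
  · obtain ⟨t₀, rfl⟩ : v ∈ range fun t => ∫ y in Iio t, f y :=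
      mem_range_of_exists_le_of_exists_ge (continuous_setIntegral_Iio hf)
        ((tendsto_integral_Iio_zero tendsto_id).eventually (eventually_le_nhds hv₀)).exists
        ((tendsto_setIntegral_Iio_atTop hf).eventually (eventually_ge_nhds hv)).exists
    have : halfLineOfMass f (∫ y in Iio t₀, f y) = Iio t₀ := ext fun t => hmono.lt_iff_lt
    rw [this]
  · have : halfLineOfMass f (∫ y, f y) = univ := eq_univ_of_forall fun t =>
      (hmono (lt_add_one t)).trans_le
        (hmono.monotone.ge_of_tendsto (tendsto_setIntegral_Iio_atTop hf) (t + 1))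
    rw [this, setIntegral_univ]

theorem setIntegral_symmDiff_halfLineOfMass (hf : Integrable f) (hpos : ∀ x, 0 < f x)
    {v₁ v₂ : ℝ} (hv₁₀ : 0 ≤ v₁) (hv₁ : v₁ ≤ ∫ y, f y) (hv₂₀ : 0 ≤ v₂) (hv₂ : v₂ ≤ ∫ y, f y) :
    ∫ x in halfLineOfMass f v₁ ∆ halfLineOfMass f v₂, f x = |v₁ - v₂| := by
  wlog h : v₁ ≤ v₂ generalizing v₁ v₂
  · rw [symmDiff_comm, abs_sub_comm]
    exact this hv₂₀ hv₂ hv₁₀ hv₁ (le_of_not_ge h)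
  have hsub : halfLineOfMass f v₁ ⊆ halfLineOfMass f v₂ := fun t ht => ht.trans_le h
  rw [symmDiff_of_le hsub,
    setIntegral_sdiff (measurableSet_halfLineOfMass hf v₁) hf.integrableOn hsub,
    setIntegral_halfLineOfMass hf hpos hv₁₀ hv₁, setIntegral_halfLineOfMass hf hpos hv₂₀ hv₂,
    abs_sub_comm, abs_of_nonneg (sub_nonneg.2 h)]

end HalfLine

section EhrhardSymm

variable {n : ℕ} {A : Matrix (Fin (n + 1)) (Fin (n + 1)) ℝ}

theorem sect_ehrhardSymm (E : Set ((Fin n → ℝ) × ℝ)) (z : Fin n → ℝ) :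
    sect (ehrhardSymm A E) z = halfLineOfMass (dens A z) (∫ y in sect E z, dens A z y) :=
  rfl

theorem sect_symmDiff (F₁ F₂ : Set ((Fin n → ℝ) × ℝ)) (z : Fin n → ℝ) :
    sect (F₁ ∆ F₂) z = sect F₁ z ∆ sect F₂ z :=
  rfl

theorem integral_dens_eq_integral_sect (hA : A.PosDef) {F : Set ((Fin n → ℝ) × ℝ)}
    (hF : MeasurableSet F) :
    ∫ p in F, dens A p.1 p.2 = ∫ z, ∫ y in sect F z, dens A z y :=
  setIntegral_prod_eq_integral_setIntegral_preimage (integrable_dens hA) hF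

theorem integrable_integral_sect (hA : A.PosDef) {F : Set ((Fin n → ℝ) × ℝ)}
    (hF : MeasurableSet F) : Integrable fun z => ∫ y in sect F z, dens A z y :=
  (integrable_dens hA).setIntegral_preimage_prodMk hF

theorem measurableSet_ehrhardSymm {E : Set ((Fin n → ℝ) × ℝ)} (hE : MeasurableSet E) :
    MeasurableSet (ehrhardSymm A E) := by
  -- `φ_z(y)` is the section at `(z, y)` of the density over `{((z, y), u) | u < y}`.
  have hΦ := (((continuous_dens A).comp ((continuous_fst.comp continuous_fst).prodMk
    continuous_snd)).stronglyMeasurable.setIntegral_preimage_prodMk (ν := volume)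
    (measurableSet_lt measurable_snd (measurable_snd.comp measurable_fst))).measurable
  have hv := ((continuous_dens A).stronglyMeasurable.setIntegral_preimage_prodMk (ν := volume)
    hE).measurable
  exact measurableSet_lt hΦ (hv.comp measurable_fst)

theorem setIntegral_dens_sect_mem_Icc (hA : A.PosDef) (F : Set ((Fin n → ℝ) × ℝ))
    (z : Fin n → ℝ) : ∫ y in sect F z, dens A z y ∈ Icc 0 (∫ y, dens A z y) :=
  have hdens₀ : 0 ≤ᵐ[volume] dens A z := .of_forall fun y => (dens_pos A z y).le
  ⟨setIntegral_nonneg_of_ae hdens₀, setIntegral_le_integral (integrable_dens_sect hA z) hdens₀⟩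

end EhrhardSymm

theorem ehrhardSymm_mass_and_contraction_general {n : ℕ}
    (A : Matrix (Fin (n + 1)) (Fin (n + 1)) ℝ) (hA : A.PosDef)
    (E E₁ E₂ : Set ((Fin n → ℝ) × ℝ))
    (hE : MeasurableSet E) (hE₁ : MeasurableSet E₁) (hE₂ : MeasurableSet E₂) :
    gMass A (ehrhardSymm A E) = gMass A E ∧
      gMass A (ehrhardSymm A E₁ ∆ ehrhardSymm A E₂) ≤ gMass A (E₁ ∆ E₂) := by
  have hdens (z) := integrable_dens_sect hA z
  have hpos (z) := dens_pos A z
  have hS₁ := measurableSet_ehrhardSymm (A := A) hE₁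
  have hS₂ := measurableSet_ehrhardSymm (A := A) hE₂
  unfold gMass
  refine ⟨congrArg (HMul.hMul _) ?_, mul_le_mul_of_nonneg_left ?_ (by positivity)⟩
  · rw [integral_dens_eq_integral_sect hA (measurableSet_ehrhardSymm hE),
      integral_dens_eq_integral_sect hA hE]
    refine integral_congr_ae (.of_forall fun z => ?_)
    obtain ⟨hv₀, hv⟩ := setIntegral_dens_sect_mem_Icc hA E z
    exact setIntegral_halfLineOfMass (hdens z) (hpos z) hv₀ hv
  · rw [integral_dens_eq_integral_sect hA (hS₁.symmDiff hS₂),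
      integral_dens_eq_integral_sect hA (hE₁.symmDiff hE₂)]
    refine integral_mono (integrable_integral_sect hA (hS₁.symmDiff hS₂))
      (integrable_integral_sect hA (hE₁.symmDiff hE₂)) fun z => ?_
    obtain ⟨hv₁₀, hv₁⟩ := setIntegral_dens_sect_mem_Icc hA E₁ z
    obtain ⟨hv₂₀, hv₂⟩ := setIntegral_dens_sect_mem_Icc hA E₂ z
    simp only [sect_symmDiff, sect_ehrhardSymm]
    rw [setIntegral_symmDiff_halfLineOfMass (hdens z) (hpos z) hv₁₀ hv₁ hv₂₀ hv₂]
    exact abs_setIntegral_sub_setIntegral_le (hdens z) (fun y => (hpos z y).le)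
      (measurable_prodMk_left hE₁) (measurable_prodMk_left hE₂)

/-- Mass preservation and L¹-contraction of Ehrhard symmetrization:
for sets `E, E₁, E₂` of finite anisotropic Gaussian perimeter,
`γ_A(E) = γ_A(E^s)` and `γ_A(E₁ Δ E₂) ≥ γ_A(E₁^s Δ E₂^s)`. -/
theorem ehrhardSymm_mass_and_contraction {n : ℕ}
    (A : Matrix (Fin (n + 1)) (Fin (n + 1)) ℝ) (hA : A.PosDef)
    (E E₁ E₂ : Set ((Fin n → ℝ) × ℝ))
    (hE : MeasurableSet E) (hE₁ : MeasurableSet E₁) (hE₂ : MeasurableSet E₂)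
    (hEp : finGaussPerim A E) (hE₁p : finGaussPerim A E₁) (hE₂p : finGaussPerim A E₂) :
    gMass A (ehrhardSymm A E) = gMass A E ∧
      gMass A (ehrhardSymm A E₁ ∆ ehrhardSymm A E₂) ≤ gMass A (E₁ ∆ E₂) :=
  ehrhardSymm_mass_and_contraction_general A hA E E₁ E₂ hE hE₁ hE₂
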